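/- arXiv:2208.05333 — 2 statements merged into one kernel-verified Lean document; each statement's English description precedes it below -/
import Mathlib

section
/- Edge marginals are Fourier pairs (Proposition 1): fix an edge e₀ ∈ E, and suppose Z_p ≠ 0, ψ_{e₀}(a) ≠ 0 for all a, and ψ̃_{e₀}(a) ≠ 0 for all a (so also Z_d = q^{|E|}Z_p ≠ 0). Define the primal edge marginal π_p(a) = (Σ_{x : y_{e₀}(x) = a} Π_{e∈E} ψ_e(y_e(x)) Π_{v∈V} φ_v(x(v)))/Z_p and the dual edge marginal π_d(a) = (Σ_{ỹ : ỹ(e₀) = a} Π_{e∈E} ψ̃_e(ỹ(e)) Π_{v∈V} φ̃_v(x̃_v(ỹ)))/Z_d. Then for every a ∈ ZMod q: π_p(a)/ψ_{e₀}(a) = Σ_{a'∈ZMod q} (π_d(a')/ψ̃_{e₀}(a')) · ω^{a·a'}. -/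
open scoped BigOperators

/-- The character value ω^{a·b} = exp(−2πi·a·b/q). -/
noncomputable def omegaPow (q : ℕ) (a b : ZMod q) : ℂ :=
  Complex.exp (-2 * Real.pi * Complex.I * ((a.val * b.val : ℕ) : ℂ) / (q : ℂ))

/-- The discrete Fourier transform of `f : ZMod q → ℂ`. -/
noncomputable def dft (q : ℕ) [NeZero q] (f : ZMod q → ℂ) (b : ZMod q) : ℂ :=
  ∑ a : ZMod q, f a * omegaPow q a b

/-- The dual vertex variable x̃_v(yt). -/
noncomputable def dualX {V E : Type*} [Fintype E] [DecidableEq V]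
    (s t : E → V) (q : ℕ) (yt : E → ZMod q) (v : V) : ZMod q :=
  -((∑ e ∈ Finset.univ.filter (fun e => s e = v), yt e) -
     ∑ e ∈ Finset.univ.filter (fun e => t e = v), yt e)

/-- The primal partition function. -/
noncomputable def Zp {V E : Type*} [Fintype V] [Fintype E] [DecidableEq V]
    (s t : E → V) (q : ℕ) [NeZero q]
    (ψ : E → ZMod q → ℂ) (φ : V → ZMod q → ℂ) : ℂ :=
  ∑ x : V → ZMod q, (∏ e : E, ψ e (x (s e) - x (t e))) * ∏ v : V, φ v (x v)

/-- The dual partition function. -/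
noncomputable def Zd {V E : Type*} [Fintype V] [Fintype E] [DecidableEq V] [DecidableEq E]
    (s t : E → V) (q : ℕ) [NeZero q]
    (ψ : E → ZMod q → ℂ) (φ : V → ZMod q → ℂ) : ℂ :=
  ∑ yt : E → ZMod q, (∏ e : E, dft q (ψ e) (yt e)) * ∏ v : V, dft q (φ v) (dualX s t q yt v)

/-! Expanding every vertex transform φ̃_v and using `Σ_v x_v · x̃_v(ỹ) = -Σ_e y_e(x) · ỹ_e`, a dual
sum with arbitrary edge weights `g_e` equals `q ^ |E|` times the primal sum with edge factors
`𝓕⁻ g_e`; for `g_e = ψ̃_e` this is `Z_d = q ^ |E| · Z_p`. Fixing `ỹ(e₀) = a'` amounts to taking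
`g_{e₀} = ψ̃_{e₀}(a') · δ_{a'}`, so the dual marginal is `q ^ |E| · ψ̃_{e₀}(a') · 𝓕⁻ R (a')`, where
`R = cavity` is the primal marginal with the factor `ψ_{e₀}` removed, while the primal marginal
is `ψ_{e₀} · R`. Fourier inversion `𝓕 (𝓕⁻ R) = R` then gives the claim. -/

open Finset
open ZMod (stdAddChar stdAddChar_coe dft_apply invDFT_apply)
open scoped ZMod

lemma AddChar.map_sum_eq_prod {A M ι : Type*} [AddCommMonoid A] [CommMonoid M]
    (ψ : AddChar A M) (s : Finset ι) (f : ι → A) : ψ (∑ i ∈ s, f i) = ∏ i ∈ s, ψ (f i) := by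
  induction s using Finset.cons_induction with
  | empty => simp
  | cons i s hi ih => rw [sum_cons, prod_cons, AddChar.map_add_eq_mul, ih]

lemma omegaPow_eq_stdAddChar (q : ℕ) [NeZero q] (a b : ZMod q) :
    omegaPow q a b = stdAddChar (-(a * b)) := by
  have hab : a * b = ((a.val * b.val : ℕ) : ℤ) := by simp
  rw [AddChar.map_neg_eq_inv, hab, stdAddChar_coe, omegaPow, ← Complex.exp_neg]
  congr 1
  push_cast
  ring

lemma omegaPow_comm (q : ℕ) (a b : ZMod q) : omegaPow q a b = omegaPow q b a := by
  rw [omegaPow, omegaPow, Nat.mul_comm]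

lemma dft_eq_zmod_dft (q : ℕ) [NeZero q] (f : ZMod q → ℂ) : dft q f = 𝓕 f := by
  ext b
  simp [dft, dft_apply, omegaPow_eq_stdAddChar, mul_comm]

lemma sum_mul_stdAddChar_eq_invDFT (q : ℕ) [NeZero q] (g : ZMod q → ℂ) (c : ZMod q) :
    ∑ b, g b * stdAddChar (c * b) = q * 𝓕⁻ g c := by
  rw [invDFT_apply, smul_eq_mul, mul_inv_cancel_left₀ (Nat.cast_ne_zero.mpr (NeZero.ne q))]
  simp [mul_comm]

lemma sum_invDFT_mul (q : ℕ) [NeZero q] (g R : ZMod q → ℂ) :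
    ∑ c, 𝓕⁻ g c * R c = ∑ b, g b * 𝓕⁻ R b := by
  simp only [invDFT_apply, smul_eq_mul, mul_sum, sum_mul]
  rw [sum_comm]
  refine sum_congr rfl fun b _ => sum_congr rfl fun c _ => ?_
  rw [mul_comm b c]
  ring

section Duality

variable {V E : Type*} [Fintype V] [Fintype E] [DecidableEq V] (s t : E → V) {q : ℕ}

lemma sum_mul_dualX (x : V → ZMod q) (yt : E → ZMod q) :
    ∑ v, x v * dualX s t q yt v = -∑ e, (x (s e) - x (t e)) * yt e := by
  have fiber (u : E → V) :
      ∑ v, x v * ∑ e ∈ univ.filter (fun e => u e = v), yt e = ∑ e, x (u e) * yt e := by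
    rw [← sum_fiberwise univ u]
    refine sum_congr rfl fun v _ => ?_
    rw [mul_sum]
    exact sum_congr rfl fun e he => by rw [(mem_filter.mp he).2]
  simp only [dualX, mul_neg, mul_sub, sum_neg_distrib, sum_sub_distrib, fiber, sub_mul]

lemma prod_dft_dualX [NeZero q] (φ : V → ZMod q → ℂ) (yt : E → ZMod q) :
    ∏ v, dft q (φ v) (dualX s t q yt v) =
      ∑ x : V → ZMod q, (∏ v, φ v (x v)) * ∏ e, stdAddChar ((x (s e) - x (t e)) * yt e) := by
  simp only [dft, omegaPow_eq_stdAddChar]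
  rw [Fintype.prod_sum]
  refine sum_congr rfl fun x _ => ?_
  rw [prod_mul_distrib, ← AddChar.map_sum_eq_prod, ← AddChar.map_sum_eq_prod, sum_neg_distrib,
    sum_mul_dualX, neg_neg]

theorem sum_prod_mul_prod_dft_dualX [DecidableEq E] [NeZero q] (g : E → ZMod q → ℂ)
    (φ : V → ZMod q → ℂ) :
    ∑ yt : E → ZMod q, (∏ e, g e (yt e)) * ∏ v, dft q (φ v) (dualX s t q yt v) =
      q ^ Fintype.card E * Zp s t q (fun e => 𝓕⁻ (g e)) φ := by
  calc _ = ∑ x : V → ZMod q, (∏ v, φ v (x v)) *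
        ∑ yt : E → ZMod q, ∏ e, g e (yt e) * stdAddChar ((x (s e) - x (t e)) * yt e) := by
        simp only [prod_dft_dualX, mul_sum, prod_mul_distrib]
        rw [sum_comm]
        exact sum_congr rfl fun x _ => sum_congr rfl fun yt _ => by ring
    _ = ∑ x : V → ZMod q, (∏ v, φ v (x v)) * ∏ e, (q * 𝓕⁻ (g e) (x (s e) - x (t e))) := by
        refine sum_congr rfl fun x _ => ?_
        rw [← Fintype.prod_sum fun e b => g e b * stdAddChar ((x (s e) - x (t e)) * b)]
        simp only [sum_mul_stdAddChar_eq_invDFT]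
    _ = _ := by
        simp only [Zp, mul_sum, prod_mul_distrib, prod_const, card_univ]
        exact sum_congr rfl fun x _ => by ring

theorem Zd_eq_pow_mul_Zp [DecidableEq E] [NeZero q] (ψ : E → ZMod q → ℂ) (φ : V → ZMod q → ℂ) :
    Zd s t q ψ φ = q ^ Fintype.card E * Zp s t q ψ φ :=
  (sum_prod_mul_prod_dft_dualX s t (fun e => dft q (ψ e)) φ).trans <| by
    simp only [dft_eq_zmod_dft, LinearEquiv.symm_apply_apply]

end Duality

section EdgeMarginals

variable {V E : Type*} [Fintype V] [Fintype E] [DecidableEq V] [DecidableEq E] (s t : E → V)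
  {q : ℕ} [NeZero q]

noncomputable def cavity (ψ : E → ZMod q → ℂ) (φ : V → ZMod q → ℂ) (e₀ : E) (c : ZMod q) : ℂ :=
  ∑ x ∈ univ.filter (fun x : V → ZMod q => x (s e₀) - x (t e₀) = c),
    (∏ e ∈ univ.erase e₀, ψ e (x (s e) - x (t e))) * ∏ v, φ v (x v)

lemma sum_edge_fiber_eq_mul_cavity (ψ : E → ZMod q → ℂ) (φ : V → ZMod q → ℂ) (e₀ : E)
    (c : ZMod q) :
    ∑ x ∈ univ.filter (fun x : V → ZMod q => x (s e₀) - x (t e₀) = c),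
        (∏ e, ψ e (x (s e) - x (t e))) * ∏ v, φ v (x v) =
      ψ e₀ c * cavity s t ψ φ e₀ c := by
  rw [cavity, mul_sum]
  refine sum_congr rfl fun x hx => ?_
  rw [← mul_prod_erase univ _ (mem_univ e₀), (mem_filter.mp hx).2, mul_assoc]

lemma cavity_update (ψ : E → ZMod q → ℂ) (φ : V → ZMod q → ℂ) (e₀ : E) (f : ZMod q → ℂ) :
    cavity s t (Function.update ψ e₀ f) φ e₀ = cavity s t ψ φ e₀ := by
  ext c
  refine sum_congr rfl fun x _ => ?_
  congr 1
  exact prod_congr rfl fun e he => by rw [Function.update_of_ne (ne_of_mem_erase he)]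

lemma Zp_update_eq_sum_mul_cavity (ψ : E → ZMod q → ℂ) (φ : V → ZMod q → ℂ) (e₀ : E)
    (f : ZMod q → ℂ) :
    Zp s t q (Function.update ψ e₀ f) φ = ∑ c, f c * cavity s t ψ φ e₀ c := by
  rw [Zp, ← sum_fiberwise univ fun x : V → ZMod q => x (s e₀) - x (t e₀)]
  simp only [sum_edge_fiber_eq_mul_cavity, Function.update_self, cavity_update]

lemma sum_dual_edge_fiber_eq_mul_invDFT_cavity (ψ : E → ZMod q → ℂ) (φ : V → ZMod q → ℂ)
    (e₀ : E) (a : ZMod q) :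
    ∑ yt ∈ univ.filter (fun yt : E → ZMod q => yt e₀ = a),
        (∏ e, dft q (ψ e) (yt e)) * ∏ v, dft q (φ v) (dualX s t q yt v) =
      q ^ Fintype.card E * (dft q (ψ e₀) a * 𝓕⁻ (cavity s t ψ φ e₀) a) := by
  set g := Function.update (fun e => dft q (ψ e)) e₀ (Pi.single a (dft q (ψ e₀) a))
  have hg (yt : E → ZMod q) :
      ∏ e, g e (yt e) = if yt e₀ = a then ∏ e, dft q (ψ e) (yt e) else 0 := by
    rw [← mul_prod_erase univ _ (mem_univ e₀), ← mul_prod_erase univ _ (mem_univ e₀)]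
    have : ∏ e ∈ univ.erase e₀, g e (yt e) = ∏ e ∈ univ.erase e₀, dft q (ψ e) (yt e) :=
      prod_congr rfl fun e he => by simp only [g, Function.update_of_ne (ne_of_mem_erase he)]
    split_ifs with h <;> simp [g, this, h]
  have hinv :
      (fun e => 𝓕⁻ (g e)) = Function.update ψ e₀ (𝓕⁻ (Pi.single a (dft q (ψ e₀) a))) := by
    funext e
    rcases eq_or_ne e e₀ with rfl | he
    · simp [g]
    · simp [g, he, dft_eq_zmod_dft]
  calc _ = ∑ yt : E → ZMod q, (∏ e, g e (yt e)) * ∏ v, dft q (φ v) (dualX s t q yt v) := by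
        rw [sum_filter]
        exact sum_congr rfl fun yt _ => by rw [hg, ite_mul, zero_mul]
    _ = _ := by
        rw [sum_prod_mul_prod_dft_dualX, hinv, Zp_update_eq_sum_mul_cavity, sum_invDFT_mul]
        simp [Pi.single_apply]

end EdgeMarginals

theorem edge_marginals_fourier_pair_general {V E : Type*} [Fintype V] [Fintype E]
    [DecidableEq V] [DecidableEq E]
    (s t : E → V) (q : ℕ) [NeZero q]
    (ψ : E → ZMod q → ℂ) (φ : V → ZMod q → ℂ) (e₀ : E)
    (hψ : ∀ a : ZMod q, ψ e₀ a ≠ 0) (hψd : ∀ a : ZMod q, dft q (ψ e₀) a ≠ 0)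
    (a : ZMod q) :
    ((∑ x ∈ Finset.univ.filter (fun x : V → ZMod q => x (s e₀) - x (t e₀) = a),
        (∏ e : E, ψ e (x (s e) - x (t e))) * ∏ v : V, φ v (x v)) / Zp s t q ψ φ) / ψ e₀ a =
      ∑ a' : ZMod q,
        (((∑ yt ∈ Finset.univ.filter (fun yt : E → ZMod q => yt e₀ = a'),
            (∏ e : E, dft q (ψ e) (yt e)) * ∏ v : V, dft q (φ v) (dualX s t q yt v)) /
              Zd s t q ψ φ) / dft q (ψ e₀) a') * omegaPow q a a' := by
  have hqE : (q : ℂ) ^ Fintype.card E ≠ 0 := pow_ne_zero _ (Nat.cast_ne_zero.mpr (NeZero.ne q))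
  calc _ = cavity s t ψ φ e₀ a / Zp s t q ψ φ := by
        rw [sum_edge_fiber_eq_mul_cavity, mul_div_assoc, mul_div_cancel_left₀ _ (hψ a)]
    _ = dft q (𝓕⁻ (cavity s t ψ φ e₀)) a / Zp s t q ψ φ := by
        rw [dft_eq_zmod_dft, LinearEquiv.apply_symm_apply]
    _ = _ := by
        rw [dft, sum_div]
        refine sum_congr rfl fun a' _ => ?_
        rw [sum_dual_edge_fiber_eq_mul_invDFT_cavity, Zd_eq_pow_mul_Zp, mul_div_mul_left _ _ hqE,
          mul_div_assoc (dft q (ψ e₀) a'), mul_div_cancel_left₀ _ (hψd a'), omegaPow_comm]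
        ring

/-- Proposition 1: the primal and dual edge marginals, each divided by the corresponding
edge factor, are discrete Fourier transform pairs. -/
theorem edge_marginals_fourier_pair {V E : Type*} [Fintype V] [Fintype E]
    [DecidableEq V] [DecidableEq E]
    (s t : E → V) (q : ℕ) [NeZero q]
    (ψ : E → ZMod q → ℂ) (φ : V → ZMod q → ℂ) (e₀ : E)
    (hZp : Zp s t q ψ φ ≠ 0)
    (hψ : ∀ a : ZMod q, ψ e₀ a ≠ 0) (hψd : ∀ a : ZMod q, dft q (ψ e₀) a ≠ 0)
    (a : ZMod q) :
    ((∑ x ∈ Finset.univ.filter (fun x : V → ZMod q => x (s e₀) - x (t e₀) = a),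
        (∏ e : E, ψ e (x (s e) - x (t e))) * ∏ v : V, φ v (x v)) / Zp s t q ψ φ) / ψ e₀ a =
      ∑ a' : ZMod q,
        (((∑ yt ∈ Finset.univ.filter (fun yt : E → ZMod q => yt e₀ = a'),
            (∏ e : E, dft q (ψ e) (yt e)) * ∏ v : V, dft q (φ v) (dualX s t q yt v)) /
              Zd s t q ψ φ) / dft q (ψ e₀) a') * omegaPow q a a' :=
  edge_marginals_fourier_pair_general s t q ψ φ e₀ hψ hψd a
end

section
/- Uncertainty-principle inequality for the ferromagnetic Ising model: with J(e) ≥ 0 for all e and H(v) ≥ 0 for all v, for every edge e₀ the product of the primal and dual edge marginals at e₀ satisfies π_p(e₀) · π_d(e₀) ≥ 1/2, where π_p(e₀) = (Σ_{x : x(s e₀) = x(t e₀)} w(x)) / (Σ_x w(x)) and π_d(e₀) = (Σ_{ỹ : ỹ(e₀) = 0} W(ỹ)) / (Σ_ỹ W(ỹ)). -/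
open scoped BigOperators
/-- The weight of a primal Ising configuration `x : V → ZMod 2`. -/
noncomputable def isingWeight {V E : Type*} [Fintype V] [Fintype E]
    (s t : E → V) (J : E → ℝ) (H : V → ℝ) (x : V → ZMod 2) : ℝ :=
  (∏ e : E, Real.exp (J e * (if x (s e) = x (t e) then 1 else -1))) *
    ∏ v : V, Real.exp (H v * (if x v = 0 then 1 else -1))

/-- The dual vertex variable `x̃_v(yt)` in `ZMod 2`. -/
noncomputable def dualX2 {V E : Type*} [Fintype E] [DecidableEq V]
    (s t : E → V) (yt : E → ZMod 2) (v : V) : ZMod 2 :=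
  (∑ e ∈ Finset.univ.filter (fun e => s e = v), yt e) +
    ∑ e ∈ Finset.univ.filter (fun e => t e = v), yt e

/-- The weight of a dual Ising configuration `yt : E → ZMod 2`. -/
noncomputable def dualIsingWeight {V E : Type*} [Fintype V] [Fintype E] [DecidableEq V]
    (s t : E → V) (J : E → ℝ) (H : V → ℝ) (yt : E → ZMod 2) : ℝ :=
  (∏ e : E, if yt e = 0 then Real.cosh (J e) else Real.sinh (J e)) *
    ∏ v : V, if dualX2 s t yt v = 0 then Real.cosh (H v) else Real.sinh (H v)


namespace IsingAux

noncomputable def sg (a : ZMod 2) : ℝ := if a = 0 then 1 else -1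

lemma zcases : ∀ a : ZMod 2, a = 0 ∨ a = 1 := by decide

@[simp] lemma sg_zero : sg 0 = 1 := by simp [sg]

@[simp] lemma sg_one : sg 1 = -1 := by rw [sg, if_neg (by decide)]

lemma sg_add (a b : ZMod 2) : sg (a + b) = sg a * sg b := by
  rcases zcases a with h | h <;> rcases zcases b with h' | h' <;> subst h <;> subst h' <;>
    simp [show (1:ZMod 2) + 1 = 0 by decide]

lemma sg_sum {ι : Type*} (sf : Finset ι) (f : ι → ZMod 2) :
    sg (∑ i ∈ sf, f i) = ∏ i ∈ sf, sg (f i) := by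
  induction sf using Finset.cons_induction with
  | empty => simp
  | cons a sf ha ih => rw [Finset.sum_cons, Finset.prod_cons, sg_add, ih]

lemma sum_zmod2 (f : ZMod 2 → ℝ) : ∑ a : ZMod 2, f a = f 0 + f 1 := by
  have h : (Finset.univ : Finset (ZMod 2)) = {0, 1} := by decide
  rw [h, Finset.sum_insert (by decide), Finset.sum_singleton]

lemma sum_fun_prod {ι : Type*} [Fintype ι] [DecidableEq ι] (f : ι → ZMod 2 → ℝ) :
    ∑ u : ι → ZMod 2, ∏ i, f i (u i) = ∏ i, (f i 0 + f i 1) := by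
  rw [← Fintype.prod_sum f]
  exact Finset.prod_congr rfl fun i _ => sum_zmod2 (f i)

lemma key_exp {V E : Type*} [Fintype V] [Fintype E] [DecidableEq V]
    (s t : E → V) (x : V → ZMod 2) (w : E → ZMod 2) :
    ∑ v, x v * dualX2 s t w v = ∑ e, (x (s e) + x (t e)) * w e := by
  unfold dualX2
  simp only [mul_add, add_mul, Finset.sum_add_distrib]
  congr 1
  · rw [← Finset.sum_fiberwise Finset.univ s (fun e => x (s e) * w e)]
    refine Finset.sum_congr rfl fun v _ => ?_
    rw [Finset.mul_sum]
    exact (Finset.sum_congr rfl fun e he => by rw [(Finset.mem_filter.mp he).2]).symm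
  · rw [← Finset.sum_fiberwise Finset.univ t (fun e => x (t e) * w e)]
    refine Finset.sum_congr rfl fun v _ => ?_
    rw [Finset.mul_sum]
    exact (Finset.sum_congr rfl fun e he => by rw [(Finset.mem_filter.mp he).2]).symm


variable {V E : Type*} [Fintype V] [Fintype E] [DecidableEq V] [DecidableEq E]

noncomputable def csf (J : E → ℝ) (e : E) (a : ZMod 2) : ℝ :=
  if a = 0 then Real.cosh (J e) else Real.sinh (J e)

noncomputable def dvf (H : V → ℝ) (v : V) (a : ZMod 2) : ℝ :=
  if a = 0 then Real.cosh (H v) else Real.sinh (H v)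

omit [DecidableEq E] in
lemma dualIsingWeight_eq (s t : E → V) (J : E → ℝ) (H : V → ℝ) (y : E → ZMod 2) :
    dualIsingWeight s t J H y
      = (∏ e, csf J e (y e)) * ∏ v, dvf H v (dualX2 s t y v) := rfl

lemma exp_sg (Jr : ℝ) (c : ZMod 2) :
    Real.cosh Jr + Real.sinh Jr * sg c = Real.exp (Jr * sg c) := by
  rcases zcases c with h | h <;> subst h <;> simp [Real.cosh_add_sinh]
  rw [← Real.cosh_sub_sinh]
  ring

lemma sg_eq_ite (a b : ZMod 2) : sg (a + b) = if a = b then 1 else -1 := by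
  rcases zcases a with h | h <;> rcases zcases b with h' | h' <;> subst h <;> subst h' <;>
    first
      | (rw [show (1:ZMod 2)+1 = 0 from by decide]; simp)
      | simp [show (0:ZMod 2) ≠ 1 from by decide, show (1:ZMod 2) ≠ 0 from by decide]

lemma edge_expand (Jr : ℝ) (a b : ZMod 2) :
    Real.exp (Jr * (if a = b then 1 else -1))
      = Real.cosh Jr + Real.sinh Jr * sg (a + b) := by
  rw [exp_sg, sg_eq_ite]


lemma weight_expand (s t : E → V) (J : E → ℝ) (H : V → ℝ) (x : V → ZMod 2) :
    isingWeight s t J H x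
      = (∑ y : E → ZMod 2, ∏ e, csf J e (y e) * sg ((x (s e) + x (t e)) * y e))
        * ∑ z : V → ZMod 2, ∏ v, dvf H v (z v) * sg (x v * z v) := by
  rw [sum_fun_prod (fun e a => csf J e a * sg ((x (s e) + x (t e)) * a)),
    sum_fun_prod (fun v a => dvf H v a * sg (x v * a))]
  unfold isingWeight
  congr 1
  · refine Finset.prod_congr rfl fun e _ => ?_
    rw [edge_expand]
    simp [csf, show (1:ZMod 2) ≠ 0 from by decide]
  · refine Finset.prod_congr rfl fun v _ => ?_
    have h := edge_expand (H v) (x v) 0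
    rw [add_zero] at h
    rw [h]
    simp [dvf, show (1:ZMod 2) ≠ 0 from by decide]

lemma zadd2 : ∀ a b : ZMod 2, a + b + b = a := by decide

lemma dv_collapse (H : V → ℝ) (v : V) (m : ZMod 2) :
    dvf H v 0 * (1 + sg (m + 0)) + dvf H v 1 * (1 + sg (m + 1)) = 2 * dvf H v m := by
  rcases zcases m with h | h <;> subst h <;>
    simp [dvf, show (1:ZMod 2)+1 = 0 from by decide, show (1:ZMod 2) ≠ 0 from by decide] <;>
    ring

lemma M1 (s t : E → V) (J : E → ℝ) (H : V → ℝ) (k : E → ZMod 2) :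
    ∑ x : V → ZMod 2, (∏ e, sg ((x (s e) + x (t e)) * k e)) * isingWeight s t J H x
      = 2 ^ (Fintype.card V) *
        ∑ y : E → ZMod 2, (∏ e, csf J e (y e + k e)) * ∏ v, dvf H v (dualX2 s t y v) := by
  have hA : ∀ x : V → ZMod 2,
      (∏ e, sg ((x (s e) + x (t e)) * k e)) * isingWeight s t J H x
        = ∑ y : E → ZMod 2, ∑ z : V → ZMod 2,
            ((∏ e, csf J e (y e)) * ∏ v, dvf H v (z v)) *
              ∏ v, sg (x v * (dualX2 s t (fun e => y e + k e) v + z v)) := by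
    intro x
    rw [weight_expand, Finset.sum_mul_sum, Finset.mul_sum]
    refine Finset.sum_congr rfl fun y _ => ?_
    rw [Finset.mul_sum]
    refine Finset.sum_congr rfl fun z _ => ?_
    rw [Finset.prod_mul_distrib, Finset.prod_mul_distrib]
    have h1 : (∏ e, sg ((x (s e) + x (t e)) * k e)) * ∏ e, sg ((x (s e) + x (t e)) * y e)
        = ∏ v, sg (x v * dualX2 s t (fun e => y e + k e) v) := by
      rw [← Finset.prod_mul_distrib]
      have he : ∀ e : E, sg ((x (s e) + x (t e)) * k e) * sg ((x (s e) + x (t e)) * y e)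
          = sg ((x (s e) + x (t e)) * (y e + k e)) := by
        intro e; rw [mul_add, sg_add, mul_comm]
      rw [Finset.prod_congr rfl fun e _ => he e, ← sg_sum, ← key_exp s t x, sg_sum]
    have h2 : (∏ v, sg (x v * dualX2 s t (fun e => y e + k e) v)) * ∏ v, sg (x v * z v)
        = ∏ v, sg (x v * (dualX2 s t (fun e => y e + k e) v + z v)) := by
      rw [← Finset.prod_mul_distrib]
      refine Finset.prod_congr rfl fun v _ => ?_
      rw [mul_add, sg_add]
    have h3 : ((∏ e, sg ((x (s e) + x (t e)) * k e)) * ∏ e, sg ((x (s e) + x (t e)) * y e)) *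
          ∏ v, sg (x v * z v)
        = ∏ v, sg (x v * (dualX2 s t (fun e => y e + k e) v + z v)) := by rw [h1, h2]
    linear_combination ((∏ e, csf J e (y e)) * ∏ v, dvf H v (z v)) * h3
  have hB : ∑ x : V → ZMod 2, (∏ e, sg ((x (s e) + x (t e)) * k e)) * isingWeight s t J H x
      = ∑ y : E → ZMod 2, ∑ z : V → ZMod 2, ∑ x : V → ZMod 2,
          ((∏ e, csf J e (y e)) * ∏ v, dvf H v (z v)) *
            ∏ v, sg (x v * (dualX2 s t (fun e => y e + k e) v + z v)) := by
    rw [Finset.sum_congr rfl fun x _ => hA x, Finset.sum_comm]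
    exact Finset.sum_congr rfl fun y _ => Finset.sum_comm
  rw [hB]
  have hC : ∀ y : E → ZMod 2,
      (∑ z : V → ZMod 2, ∑ x : V → ZMod 2,
        ((∏ e, csf J e (y e)) * ∏ v, dvf H v (z v)) *
          ∏ v, sg (x v * (dualX2 s t (fun e => y e + k e) v + z v)))
      = (∏ e, csf J e (y e)) *
          (2 ^ (Fintype.card V) * ∏ v, dvf H v (dualX2 s t (fun e => y e + k e) v)) := by
    intro y
    calc (∑ z : V → ZMod 2, ∑ x : V → ZMod 2,
            ((∏ e, csf J e (y e)) * ∏ v, dvf H v (z v)) *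
              ∏ v, sg (x v * (dualX2 s t (fun e => y e + k e) v + z v)))
        = ∑ z : V → ZMod 2, (∏ e, csf J e (y e)) *
            ∏ v, (dvf H v (z v) * (1 + sg (dualX2 s t (fun e => y e + k e) v + z v))) := by
          refine Finset.sum_congr rfl fun z _ => ?_
          rw [← Finset.mul_sum,
            sum_fun_prod (fun v a => sg (a * (dualX2 s t (fun e => y e + k e) v + z v))),
            Finset.prod_mul_distrib]
          simp only [zero_mul, sg_zero, one_mul]
          ring
      _ = (∏ e, csf J e (y e)) *
            ∑ z : V → ZMod 2,
              ∏ v, (dvf H v (z v) * (1 + sg (dualX2 s t (fun e => y e + k e) v + z v))) :=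
          (Finset.mul_sum _ _ _).symm
      _ = (∏ e, csf J e (y e)) *
            ∏ v, (dvf H v 0 * (1 + sg (dualX2 s t (fun e => y e + k e) v + 0))
              + dvf H v 1 * (1 + sg (dualX2 s t (fun e => y e + k e) v + 1))) := by
          rw [sum_fun_prod (fun v a =>
            dvf H v a * (1 + sg (dualX2 s t (fun e => y e + k e) v + a)))]
      _ = (∏ e, csf J e (y e)) * ∏ v, (2 * dvf H v (dualX2 s t (fun e => y e + k e) v)) := by
          rw [Finset.prod_congr rfl fun v _ => dv_collapse H v _]
      _ = (∏ e, csf J e (y e)) *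
            (2 ^ (Fintype.card V) * ∏ v, dvf H v (dualX2 s t (fun e => y e + k e) v)) := by
          rw [Finset.prod_mul_distrib, Finset.prod_const, Finset.card_univ]
  rw [Finset.sum_congr rfl fun y _ => hC y, Finset.mul_sum]
  refine Fintype.sum_bijective (fun y e => y e + k e)
    (Function.Involutive.bijective fun y => funext fun e => zadd2 (y e) (k e)) _ _ (fun y => ?_)
  have h3 : ∀ e, (y e + k e) + k e = y e := fun e => zadd2 (y e) (k e)
  simp only [h3]
  ring


omit [Fintype V] [DecidableEq V] in
lemma two_dv (H : V → ℝ) (v : V) (m : ZMod 2) :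
    Real.exp (H v * sg 0) * sg (m * 0) + Real.exp (H v * sg 1) * sg (m * 1)
      = 2 * dvf H v m := by
  rcases zcases m with h | h <;> subst h <;>
    simp [dvf, sg, show (1:ZMod 2) ≠ 0 from by decide, mul_neg_one,
      Real.cosh_eq, Real.sinh_eq] <;> ring

lemma M2 (s t : E → V) (J : E → ℝ) (H : V → ℝ) (k : E → ZMod 2) :
    (2:ℝ) ^ (Fintype.card V) *
        ∑ y : E → ZMod 2, (∏ e, sg (y e * k e)) * dualIsingWeight s t J H y
      = ∑ x : V → ZMod 2,
          (∏ e, Real.exp (J e * sg (k e + (x (s e) + x (t e))))) *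
            ∏ v, Real.exp (H v * sg (x v)) := by
  have hA : ∀ y : E → ZMod 2,
      (2:ℝ) ^ (Fintype.card V) * ((∏ e, sg (y e * k e)) * dualIsingWeight s t J H y)
        = ∑ x : V → ZMod 2,
            (∏ v, Real.exp (H v * sg (x v))) *
              ∏ e, (csf J e (y e) * sg (y e * (k e + (x (s e) + x (t e))))) := by
    intro y
    rw [dualIsingWeight_eq]
    have h2v : (2:ℝ) ^ (Fintype.card V) * ∏ v, dvf H v (dualX2 s t y v)
        = ∑ x : V → ZMod 2,
            ((∏ v, Real.exp (H v * sg (x v))) * ∏ e, sg ((x (s e) + x (t e)) * y e)) := by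
      have e1 : ∑ x : V → ZMod 2, ∏ v, (Real.exp (H v * sg (x v)) * sg (dualX2 s t y v * x v))
          = ∏ v, (Real.exp (H v * sg 0) * sg (dualX2 s t y v * 0)
              + Real.exp (H v * sg 1) * sg (dualX2 s t y v * 1)) :=
        sum_fun_prod (fun v a => Real.exp (H v * sg a) * sg (dualX2 s t y v * a))
      rw [Finset.prod_congr rfl fun v _ => two_dv H v (dualX2 s t y v),
        Finset.prod_mul_distrib, Finset.prod_const, Finset.card_univ] at e1
      rw [← e1]
      refine Finset.sum_congr rfl fun x _ => ?_
      rw [Finset.prod_mul_distrib]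
      congr 1
      rw [← sg_sum]
      have hsum : ∑ v, dualX2 s t y v * x v = ∑ e, (x (s e) + x (t e)) * y e := by
        rw [Finset.sum_congr rfl fun v _ => mul_comm (dualX2 s t y v) (x v), key_exp s t x y]
      rw [hsum, sg_sum]
    have hre : (2:ℝ) ^ (Fintype.card V) *
          ((∏ e, sg (y e * k e)) * ((∏ e, csf J e (y e)) * ∏ v, dvf H v (dualX2 s t y v)))
        = ((∏ e, sg (y e * k e)) * (∏ e, csf J e (y e))) *
            ((2:ℝ) ^ (Fintype.card V) * ∏ v, dvf H v (dualX2 s t y v)) := by ring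
    rw [hre, h2v, Finset.mul_sum]
    refine Finset.sum_congr rfl fun x _ => ?_
    have hm : ∏ e, (csf J e (y e) * sg (y e * (k e + (x (s e) + x (t e)))))
        = (∏ e, csf J e (y e)) *
            ((∏ e, sg (y e * k e)) * ∏ e, sg ((x (s e) + x (t e)) * y e)) := by
      rw [Finset.prod_mul_distrib]
      congr 1
      rw [← Finset.prod_mul_distrib]
      refine Finset.prod_congr rfl fun e _ => ?_
      rw [mul_add, sg_add, mul_comm (x (s e) + x (t e)) (y e)]
    rw [hm]; ring
  rw [Finset.mul_sum, Finset.sum_congr rfl fun y _ => hA y, Finset.sum_comm]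
  refine Finset.sum_congr rfl fun x _ => ?_
  rw [← Finset.mul_sum,
    sum_fun_prod (fun e a => csf J e a * sg (a * (k e + (x (s e) + x (t e))))),
    mul_comm]
  congr 1
  refine Finset.prod_congr rfl fun e _ => ?_
  simp only [zero_mul, sg_zero, one_mul, mul_one]
  simpa [csf, show (1:ZMod 2) ≠ 0 from by decide] using
    exp_sg (J e) (k e + (x (s e) + x (t e)))


lemma sg_one_add (c : ZMod 2) : sg (1 + c) = - sg c := by
  rcases zcases c with h | h <;> subst h <;>
    simp [show (1:ZMod 2) + 1 = 0 from by decide]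

omit [Fintype V] [DecidableEq V] in
lemma prod_sg_delta (e₀ : E) (c : E → ZMod 2) :
    (∏ e, sg (c e * (if e = e₀ then 1 else 0))) = sg (c e₀) := by
  have h : ∀ e : E, sg (c e * (if e = e₀ then (1:ZMod 2) else 0))
      = (if e = e₀ then sg (c e₀) else 1) := by
    intro e; by_cases he : e = e₀ <;> simp [he]
  rw [Finset.prod_congr rfl fun e _ => h e,
    Finset.prod_ite_eq' Finset.univ e₀ fun _ => sg (c e₀)]
  simp

omit [Fintype V] [DecidableEq V] in
lemma edge_delta (J : E → ℝ) (e₀ : E) (c : E → ZMod 2) :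
    (∏ e, Real.exp (J e * sg ((if e = e₀ then 1 else 0) + c e)))
      = (∏ e, Real.exp (J e * sg (c e))) * Real.exp (-(2 * J e₀) * sg (c e₀)) := by
  have h : ∀ e : E, Real.exp (J e * sg ((if e = e₀ then (1:ZMod 2) else 0) + c e))
      = Real.exp (J e * sg (c e)) *
          (if e = e₀ then Real.exp (-(2 * J e₀) * sg (c e₀)) else 1) := by
    intro e; by_cases he : e = e₀
    · subst he
      rw [if_pos rfl, if_pos rfl, sg_one_add, ← Real.exp_add]
      congr 1; ring
    · simp [he]
  rw [Finset.prod_congr rfl fun e _ => h e, Finset.prod_mul_distrib,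
    Finset.prod_ite_eq' Finset.univ e₀ fun _ => Real.exp (-(2 * J e₀) * sg (c e₀))]
  simp

lemma isingWeight_eq (s t : E → V) (J : E → ℝ) (H : V → ℝ) (x : V → ZMod 2) :
    isingWeight s t J H x
      = (∏ e, Real.exp (J e * sg (x (s e) + x (t e)))) * ∏ v, Real.exp (H v * sg (x v)) := by
  unfold isingWeight
  congr 1
  exact Finset.prod_congr rfl fun e _ => by rw [sg_eq_ite]

lemma duality0 (s t : E → V) (J : E → ℝ) (H : V → ℝ) :
    (2:ℝ) ^ (Fintype.card V) * ∑ y : E → ZMod 2, dualIsingWeight s t J H y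
      = ∑ x : V → ZMod 2, isingWeight s t J H x := by
  have h := M2 s t J H (fun _ => 0)
  simp only [mul_zero, sg_zero, Finset.prod_const_one, one_mul, zero_add] at h
  rw [h]
  exact Finset.sum_congr rfl fun x _ => (isingWeight_eq s t J H x).symm

lemma duality_delta (s t : E → V) (J : E → ℝ) (H : V → ℝ) (e₀ : E) :
    (2:ℝ) ^ (Fintype.card V) * ∑ y : E → ZMod 2, sg (y e₀) * dualIsingWeight s t J H y
      = ∑ x : V → ZMod 2,
          isingWeight s t J H x *
            Real.exp (-(2 * J e₀) * sg (x (s e₀) + x (t e₀))) := by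
  have h := M2 s t J H (fun e => if e = e₀ then 1 else 0)
  rw [Finset.sum_congr rfl
      (fun y _ => congrArg (· * dualIsingWeight s t J H y) (prod_sg_delta e₀ y))] at h
  have h2 : ∀ x : V → ZMod 2,
      (∏ e, Real.exp (J e * sg ((if e = e₀ then (1:ZMod 2) else 0) + (x (s e) + x (t e))))) *
          ∏ v, Real.exp (H v * sg (x v))
        = isingWeight s t J H x * Real.exp (-(2 * J e₀) * sg (x (s e₀) + x (t e₀))) := by
    intro x
    rw [edge_delta J e₀ (fun e => x (s e) + x (t e)), isingWeight_eq s t J H x]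
    ring
  rw [Finset.sum_congr rfl fun x _ => h2 x] at h
  exact h

lemma split_pm {α : Type*} [Fintype α] (p : α → Prop) [DecidablePred p] (g : α → ZMod 2)
    (hp : ∀ x, p x → g x = 0) (hn : ∀ x, ¬ p x → g x = 1) (f : α → ℝ) :
    ∑ x : α, sg (g x) * f x
      = (∑ x ∈ Finset.univ.filter p, f x)
        - ∑ x ∈ Finset.univ.filter (fun x => ¬ p x), f x := by
  rw [← Finset.sum_filter_add_sum_filter_not Finset.univ p (fun x => sg (g x) * f x)]
  have h1 : ∑ x ∈ Finset.univ.filter p, sg (g x) * f x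
      = ∑ x ∈ Finset.univ.filter p, f x :=
    Finset.sum_congr rfl fun x hx => by
      rw [hp x (Finset.mem_filter.mp hx).2, sg_zero, one_mul]
  have h2 : ∑ x ∈ Finset.univ.filter (fun x => ¬ p x), sg (g x) * f x
      = ∑ x ∈ Finset.univ.filter (fun x => ¬ p x), (- f x) :=
    Finset.sum_congr rfl fun x hx => by
      rw [hn x (Finset.mem_filter.mp hx).2, sg_one]; ring
  rw [h1, h2, Finset.sum_neg_distrib]
  ring

lemma split_exp {α : Type*} [Fintype α] (p : α → Prop) [DecidablePred p] (g : α → ZMod 2)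
    (hp : ∀ x, p x → g x = 0) (hn : ∀ x, ¬ p x → g x = 1) (f : α → ℝ) (c : ℝ) :
    ∑ x : α, f x * Real.exp (c * sg (g x))
      = (∑ x ∈ Finset.univ.filter p, f x) * Real.exp c
        + (∑ x ∈ Finset.univ.filter (fun x => ¬ p x), f x) * Real.exp (-c) := by
  rw [← Finset.sum_filter_add_sum_filter_not Finset.univ p (fun x => f x * Real.exp (c * sg (g x)))]
  congr 1
  · rw [Finset.sum_mul]
    exact Finset.sum_congr rfl fun x hx => by
      rw [hp x (Finset.mem_filter.mp hx).2, sg_zero, mul_one]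
  · rw [Finset.sum_mul]
    exact Finset.sum_congr rfl fun x hx => by
      rw [hn x (Finset.mem_filter.mp hx).2, sg_one, mul_neg_one]


lemma zeq : ∀ a b : ZMod 2, a = b → a + b = 0 := by decide
lemma zneq : ∀ a b : ZMod 2, ¬ a = b → a + b = 1 := by decide
lemma zone : ∀ c : ZMod 2, ¬ c = 0 → c = 1 := by decide

omit [Fintype V] [DecidableEq V] in
lemma prod_sg_delta2 (s t : E → V) (e₀ : E) (x : V → ZMod 2) :
    (∏ e, sg ((x (s e) + x (t e)) * (if e = e₀ then 1 else 0)))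
      = sg (x (s e₀) + x (t e₀)) :=
  prod_sg_delta e₀ (fun e => x (s e) + x (t e))

lemma arith (P Q A B C E1 E2 : ℝ) (hC : 0 < C) (hQ : 0 ≤ Q) (hB : 0 ≤ B)
    (hPQ : 0 ≤ P - Q) (hZp : 0 < P + Q)
    (h1 : C * (A + B) = P + Q) (h2 : C * (A - B) = P * E1 + Q * E2)
    (hE : E1 = E2⁻¹) (hE2 : 0 < E2) :
    1 / 2 ≤ P / (P + Q) * (A / (A + B)) := by
  subst hE
  have hP : 0 < P := by linarith
  have hAB : 0 < A + B := by
    by_contra hc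
    push_neg at hc
    have := mul_nonneg hC.le (neg_nonneg.mpr hc)
    nlinarith
  have hABd : 0 ≤ A - B := by
    have h4 : 0 ≤ C * (A - B) := by rw [h2]; positivity
    by_contra hcc
    push_neg at hcc
    have := mul_pos hC (neg_pos.mpr hcc)
    nlinarith
  have hA : 0 < A := by linarith
  have key : (P + Q) ^ 2 ≤ P * ((P + Q) + (P * E2⁻¹ + Q * E2)) := by
    rw [← sub_nonneg]
    have hh : P * ((P + Q) + (P * E2⁻¹ + Q * E2)) - (P + Q) ^ 2
        = ((P - Q * E2) ^ 2 + (P - Q) * Q * E2 + (P - Q) * Q * E2 ^ 2) / E2 := by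
      field_simp
      ring
    rw [hh]
    apply div_nonneg _ hE2.le
    have t1 := sq_nonneg (P - Q * E2)
    have t2 : 0 ≤ (P - Q) * Q * E2 := mul_nonneg (mul_nonneg hPQ hQ) hE2.le
    have t3 : 0 ≤ (P - Q) * Q * E2 ^ 2 := mul_nonneg (mul_nonneg hPQ hQ) (pow_nonneg hE2.le 2)
    linarith
  rw [div_mul_div_comm, le_div_iff₀ (by positivity)]
  have e2 : 2 * (C * A) = (P + Q) + (P * E2⁻¹ + Q * E2) := by linarith
  have h5 : C * (P * A) = P * ((P + Q) + (P * E2⁻¹ + Q * E2)) / 2 := by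
    linear_combination (P / 2) * e2
  have h6 : C * (1 / 2 * ((P + Q) * (A + B))) = (P + Q) ^ 2 / 2 := by
    linear_combination ((P + Q) / 2) * h1
  have hfin : C * (1 / 2 * ((P + Q) * (A + B))) ≤ C * (P * A) := by
    rw [h5, h6]; linarith
  exact le_of_mul_le_mul_left hfin hC

end IsingAux

open IsingAux in
/-- Uncertainty-principle inequality for the ferromagnetic Ising model:
`π_p(e₀) · π_d(e₀) ≥ 1/2`. -/
theorem ising_uncertainty_principle {V E : Type*} [Fintype V] [Fintype E]
    [DecidableEq V] [DecidableEq E]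
    (s t : E → V) (J : E → ℝ) (H : V → ℝ)
    (hJ : ∀ e, 0 ≤ J e) (hH : ∀ v, 0 ≤ H v) (e₀ : E) :
    1 / 2 ≤
      ((∑ x ∈ Finset.univ.filter (fun x : V → ZMod 2 => x (s e₀) = x (t e₀)),
          isingWeight s t J H x) / ∑ x : V → ZMod 2, isingWeight s t J H x) *
      ((∑ yt ∈ Finset.univ.filter (fun yt : E → ZMod 2 => yt e₀ = 0),
          dualIsingWeight s t J H yt) / ∑ yt : E → ZMod 2, dualIsingWeight s t J H yt) := by
  have hwpos : ∀ x : V → ZMod 2, 0 < isingWeight s t J H x := by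
    intro x; unfold isingWeight; positivity
  have hWnn : ∀ y : E → ZMod 2, 0 ≤ dualIsingWeight s t J H y := by
    intro y
    unfold dualIsingWeight
    refine mul_nonneg (Finset.prod_nonneg fun e _ => ?_) (Finset.prod_nonneg fun v _ => ?_)
    · split
      · exact (Real.cosh_pos _).le
      · exact Real.sinh_nonneg_iff.mpr (hJ e)
    · split
      · exact (Real.cosh_pos _).le
      · exact Real.sinh_nonneg_iff.mpr (hH v)
  -- Griffiths-type inequality : P - Q ≥ 0
  have hM1 := M1 s t J H (fun e => if e = e₀ then 1 else 0)
  rw [Finset.sum_congr rfl (fun x _ =>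
    congrArg (· * isingWeight s t J H x) (prod_sg_delta2 s t e₀ x))] at hM1
  rw [split_pm (fun x : V → ZMod 2 => x (s e₀) = x (t e₀))
      (fun x => x (s e₀) + x (t e₀)) (fun x hx => zeq _ _ hx) (fun x hx => zneq _ _ hx)
      (isingWeight s t J H)] at hM1
  have hPQ : 0 ≤ (∑ x ∈ Finset.univ.filter (fun x : V → ZMod 2 => x (s e₀) = x (t e₀)),
        isingWeight s t J H x)
      - ∑ x ∈ Finset.univ.filter (fun x : V → ZMod 2 => ¬ x (s e₀) = x (t e₀)),
          isingWeight s t J H x := by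
    rw [hM1]
    refine mul_nonneg (by positivity) (Finset.sum_nonneg fun y _ => ?_)
    refine mul_nonneg (Finset.prod_nonneg fun e _ => ?_) (Finset.prod_nonneg fun v _ => ?_)
    · unfold csf
      repeat' split
      all_goals
        first
          | exact (Real.cosh_pos _).le
          | exact Real.sinh_nonneg_iff.mpr (hJ e)
    · unfold dvf
      repeat' split
      all_goals
        first
          | exact (Real.cosh_pos _).le
          | exact Real.sinh_nonneg_iff.mpr (hH v)
  -- duality identities
  have hd0 := duality0 s t J H
  rw [← Finset.sum_filter_add_sum_filter_not Finset.univ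
      (fun y : E → ZMod 2 => y e₀ = 0) (dualIsingWeight s t J H),
    ← Finset.sum_filter_add_sum_filter_not Finset.univ
      (fun x : V → ZMod 2 => x (s e₀) = x (t e₀)) (isingWeight s t J H)] at hd0
  have hdd := duality_delta s t J H e₀
  rw [split_pm (fun y : E → ZMod 2 => y e₀ = 0) (fun y => y e₀)
      (fun y hy => hy) (fun y hy => zone _ hy) (dualIsingWeight s t J H)] at hdd
  rw [split_exp (fun x : V → ZMod 2 => x (s e₀) = x (t e₀))
      (fun x => x (s e₀) + x (t e₀)) (fun x hx => zeq _ _ hx) (fun x hx => zneq _ _ hx)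
      (isingWeight s t J H) (-(2 * J e₀)), neg_neg] at hdd
  have hZp : 0 < (∑ x ∈ Finset.univ.filter (fun x : V → ZMod 2 => x (s e₀) = x (t e₀)),
        isingWeight s t J H x)
      + ∑ x ∈ Finset.univ.filter (fun x : V → ZMod 2 => ¬ x (s e₀) = x (t e₀)),
          isingWeight s t J H x := by
    rw [Finset.sum_filter_add_sum_filter_not Finset.univ
      (fun x : V → ZMod 2 => x (s e₀) = x (t e₀)) (isingWeight s t J H)]
    exact Finset.sum_pos (fun x _ => hwpos x) Finset.univ_nonempty
  rw [← Finset.sum_filter_add_sum_filter_not Finset.univ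
      (fun x : V → ZMod 2 => x (s e₀) = x (t e₀)) (isingWeight s t J H),
    ← Finset.sum_filter_add_sum_filter_not Finset.univ
      (fun y : E → ZMod 2 => y e₀ = 0) (dualIsingWeight s t J H)]
  exact arith _ _ _ _ ((2:ℝ) ^ Fintype.card V)
    (Real.exp (-(2 * J e₀))) (Real.exp (2 * J e₀)) (by positivity)
    (Finset.sum_nonneg fun x _ => (hwpos x).le)
    (Finset.sum_nonneg fun y _ => hWnn y)
    hPQ hZp hd0 hdd (Real.exp_neg _) (Real.exp_pos _)
end
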